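/- arXiv:2604.13005 — 2 statements merged into one kernel-verified Lean document; each statement's English description precedes it below -/
import Mathlib

section
/- Let G₁ and G₂ be graphs on n₁ and n₂ vertices respectively, and let k₁, k₂ be natural numbers with n₁ − k₁ = n₂ − k₂. If the graphs obtained from G₁ and G₂ by deleting all universal vertices are isomorphic, then B_{≥k₁}(G₁) is isomorphic to B_{≥k₂}(G₂). -/
open Finset

variable {V : Type*} [Fintype V] [DecidableEq V]

def IsISP (G : SimpleGraph V) (P : Finpartition (univ : Finset V)) : Prop :=
  ∀ A ∈ P.parts, ∀ u ∈ A, ∀ v ∈ A, ¬ G.Adj u v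

def samePart (P : Finpartition (univ : Finset V)) (u v : V) : Prop :=
  ∃ A ∈ P.parts, u ∈ A ∧ v ∈ A

def MovedBy (P Q : Finpartition (univ : Finset V)) (x : V) : Prop :=
  P ≠ Q ∧ ∀ u v : V, u ≠ x → v ≠ x → (samePart P u v ↔ samePart Q u v)

def BellGraph (G : SimpleGraph V) :
    SimpleGraph {P : Finpartition (univ : Finset V) // IsISP G P} where
  Adj P Q := ∃ x, MovedBy P.1 Q.1 x
  symm := by
    constructor
    rintro P Q ⟨x, hne, h⟩
    exact ⟨x, Ne.symm hne, fun u v hu hv => (h u v hu hv).symm⟩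
  loopless := by
    constructor
    rintro P ⟨x, hne, _⟩
    exact hne rfl

def UpperBell (G : SimpleGraph V) (k : ℕ) :
    SimpleGraph {P : Finpartition (univ : Finset V) // IsISP G P ∧ k ≤ P.parts.card} where
  Adj P Q := ∃ x, MovedBy P.1 Q.1 x
  symm := by
    constructor
    rintro P Q ⟨x, hne, h⟩
    exact ⟨x, Ne.symm hne, fun u v hu hv => (h u v hu hv).symm⟩
  loopless := by
    constructor
    rintro P ⟨x, hne, _⟩
    exact hne rfl

def IsUniversal (G : SimpleGraph V) (v : V) : Prop :=
  ∀ w, w ≠ v → G.Adj v w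

/-! An independent-set partition puts every universal vertex in a singleton part, so it is
determined by its restriction to the non-universal vertices, and `n - #parts` only depends on
that restriction. Moving a universal vertex is impossible, since its part is forced. Hence an
isomorphism between the graphs without their universal vertices transports independent-set
partitions and single-vertex moves, and changes `#parts` by `n₂ - n₁ = k₂ - k₁`. -/

lemma Finset.card_image_eq_card_image_of_fibers {α β γ : Type*} [DecidableEq β] [DecidableEq γ]
    {s : Finset α} {f : α → β} {g : α → γ} (h : ∀ a ∈ s, ∀ b ∈ s, f a = f b ↔ g a = g b) :
    #(s.image f) = #(s.image g) := by
  -- both images are in bijection with the image of `a ↦ (f a, g a)`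
  have hfst : #((s.image fun a => (f a, g a)).image Prod.fst) = #(s.image fun a => (f a, g a)) :=
    card_image_of_injOn <| by
      simp only [Set.InjOn, coe_image, Set.mem_image, mem_coe]
      rintro _ ⟨a, ha, rfl⟩ _ ⟨b, hb, rfl⟩ hab
      simp_all
  have hsnd : #((s.image fun a => (f a, g a)).image Prod.snd) = #(s.image fun a => (f a, g a)) :=
    card_image_of_injOn <| by
      simp only [Set.InjOn, coe_image, Set.mem_image, mem_coe]
      rintro _ ⟨a, ha, rfl⟩ _ ⟨b, hb, rfl⟩ hab
      simp_all
  rw [image_image] at hfst hsnd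
  exact hfst.trans hsnd.symm

section SamePart

variable {V : Type*} [Fintype V] [DecidableEq V] {s : Set V}
  {P Q : Finpartition (univ : Finset V)} {u v w : V}

lemma samePart_iff_mem_part : samePart P u v ↔ v ∈ P.part u := by
  rw [Finpartition.mem_part_iff_exists, samePart]
  simp only [and_comm]

lemma samePart_refl (P : Finpartition (univ : Finset V)) (u : V) : samePart P u u :=
  samePart_iff_mem_part.2 (P.mem_part (mem_univ u))

lemma samePart_comm : samePart P u v ↔ samePart P v u := by
  simp only [samePart, and_comm]

lemma samePart.trans (huv : samePart P u v) (hvw : samePart P v w) : samePart P u w := by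
  obtain ⟨A, hA, hu, hv⟩ := huv
  obtain ⟨B, hB, hv', hw⟩ := hvw
  exact ⟨A, hA, hu, P.eq_of_mem_parts hA hB hv hv' ▸ hw⟩

lemma part_eq_part_iff_samePart : P.part u = P.part v ↔ samePart P u v := by
  rw [samePart_comm, samePart_iff_mem_part, P.mem_part_iff_part_eq_part (mem_univ u) (mem_univ v)]

lemma Finpartition.parts_eq_image_part (P : Finpartition (univ : Finset V)) :
    P.parts = univ.image P.part := by
  ext A
  simp only [mem_image, mem_univ, true_and]
  constructor
  · intro hA
    obtain ⟨a, ha⟩ := P.nonempty_of_mem_parts hA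
    exact ⟨a, P.part_eq_of_mem hA ha⟩
  · rintro ⟨a, rfl⟩
    exact P.part_mem.2 (mem_univ a)

lemma Finpartition.eq_of_samePart_iff (h : ∀ u v, samePart P u v ↔ samePart Q u v) : P = Q := by
  have hpart : P.part = Q.part := funext fun u => by
    ext v
    rw [← samePart_iff_mem_part, ← samePart_iff_mem_part, h]
  exact Finpartition.ext (by rw [P.parts_eq_image_part, Q.parts_eq_image_part, hpart])

def SingletonsOutside (s : Set V) (P : Finpartition (univ : Finset V)) : Prop :=
  ∀ ⦃x⦄, x ∉ s → ∀ v, samePart P x v → v = x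

lemma SingletonsOutside.samePart_iff (hP : SingletonsOutside s P) {x v : V} (hx : x ∉ s) :
    samePart P x v ↔ v = x :=
  ⟨hP hx v, fun h => h ▸ samePart_refl P x⟩

lemma SingletonsOutside.mem_of_samePart (hP : SingletonsOutside s P) {u v : V}
    (h : samePart P u v) (huv : u ≠ v) : u ∈ s ∧ v ∈ s :=
  ⟨of_not_not fun hu => huv (hP hu v h).symm,
    of_not_not fun hv => huv (hP hv u (samePart_comm.1 h))⟩

lemma SingletonsOutside.card_parts_add_card [DecidablePred (· ∈ s)]
    (hP : SingletonsOutside s P) :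
    #P.parts + Fintype.card s = Fintype.card V + #(univ.image fun a : s => P.part a) := by
  have hdisj :
      Disjoint ((univ.filter (· ∉ s)).image P.part) ((univ.filter (· ∈ s)).image P.part) := by
    simp only [disjoint_left, mem_image, mem_filter, mem_univ, true_and]
    rintro _ ⟨u, hu, rfl⟩ ⟨v, hv, huv⟩
    rw [part_eq_part_iff_samePart, samePart_comm, hP.samePart_iff hu] at huv
    exact hu (huv ▸ hv)
  have hinj : Set.InjOn P.part (univ.filter (· ∉ s) : Finset V) := by
    intro u hu v _ huv
    rw [part_eq_part_iff_samePart, hP.samePart_iff (mem_filter.1 hu).2] at huv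
    exact huv.symm
  have hcompl : #(univ.filter (· ∉ s)) + Fintype.card s = Fintype.card V := by
    rw [Fintype.card_subtype, add_comm, card_filter_add_card_filter_not, card_univ]
  have hsplit : univ.image P.part =
      (univ.filter (· ∉ s)).image P.part ∪ (univ.filter (· ∈ s)).image P.part := by
    rw [← image_union, union_comm, filter_union_filter_not_eq]
  have hsub : (univ.filter (· ∈ s)).image P.part = univ.image fun a : s => P.part a := by
    rw [← univ_map_subtype, map_eq_image, image_image]
    rfl
  rw [P.parts_eq_image_part, hsplit, card_union_of_disjoint hdisj, card_image_of_injOn hinj, hsub,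
    ← hcompl]
  ring

lemma not_movedBy_of_not_mem (hP : SingletonsOutside s P) (hQ : SingletonsOutside s Q) {x : V}
    (hx : x ∉ s) : ¬ MovedBy P Q x := by
  refine fun h => h.1 (Finpartition.eq_of_samePart_iff fun u v => ?_)
  rcases eq_or_ne u x with rfl | hu
  · rw [hP.samePart_iff hx, hQ.samePart_iff hx]
  rcases eq_or_ne v x with rfl | hv
  · rw [samePart_comm, hP.samePart_iff hx, samePart_comm, hQ.samePart_iff hx]
  exact h.2 u v hu hv

end SamePart

section Bell

variable {V : Type*} [Fintype V] [DecidableEq V] {G : SimpleGraph V}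
  {P : Finpartition (univ : Finset V)}

lemma isISP_iff : IsISP G P ↔ ∀ u v, samePart P u v → ¬ G.Adj u v :=
  ⟨fun h _ _ ⟨A, hA, hu, hv⟩ => h A hA _ hu _ hv, fun h A hA _ hu _ hv => h _ _ ⟨A, hA, hu, hv⟩⟩

lemma IsISP.singletonsOutside (hP : IsISP G P) :
    SingletonsOutside {v | ¬ IsUniversal G v} P := by
  intro x hx v h
  by_contra hv
  exact isISP_iff.1 hP x v h (not_not.1 hx v hv)

end Bell

section Transfer

variable {V₁ V₂ : Type*} [Fintype V₁] [DecidableEq V₁] [Fintype V₂] [DecidableEq V₂]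
  {G₁ : SimpleGraph V₁} {G₂ : SimpleGraph V₂} {s : Set V₁} {t : Set V₂} (e : s ≃ t)
  {P Q : Finpartition (univ : Finset V₁)}

def transferSetoid (P : Finpartition (univ : Finset V₁)) : Setoid V₂ where
  r v w := v = w ∨ ∃ a b : s, (e a : V₂) = v ∧ (e b : V₂) = w ∧ samePart P a b
  iseqv.refl _ := .inl rfl
  iseqv.symm := by
    rintro _ _ (rfl | ⟨a, b, rfl, rfl, h⟩)
    · exact .inl rfl
    · exact .inr ⟨b, a, rfl, rfl, samePart_comm.1 h⟩
  iseqv.trans := by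
    rintro _ _ _ (rfl | ⟨a, b, rfl, rfl, hab⟩) h
    · exact h
    rcases h with rfl | ⟨b', c, hb, rfl, hbc⟩
    · exact .inr ⟨a, b, rfl, rfl, hab⟩
    obtain rfl := e.injective (Subtype.ext hb)
    exact .inr ⟨a, c, rfl, rfl, hab.trans hbc⟩

open scoped Classical in
noncomputable def transfer (P : Finpartition (univ : Finset V₁)) :
    Finpartition (univ : Finset V₂) :=
  Finpartition.ofSetoid (transferSetoid e P)

lemma samePart_transfer {v w : V₂} :
    samePart (transfer e P) v w ↔
      v = w ∨ ∃ a b : s, (e a : V₂) = v ∧ (e b : V₂) = w ∧ samePart P a b := by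
  classical
  rw [samePart_iff_mem_part, transfer]
  exact Finpartition.mem_part_ofSetoid_iff_rel

lemma samePart_transfer_apply (a b : s) :
    samePart (transfer e P) (e a) (e b) ↔ samePart P a b := by
  rw [samePart_transfer]
  constructor
  · rintro (h | ⟨a', b', ha, hb, h⟩)
    · rw [e.injective (Subtype.ext h)]
      exact samePart_refl P b
    · rwa [← e.injective (Subtype.ext ha), ← e.injective (Subtype.ext hb)]
  · exact fun h => .inr ⟨a, b, rfl, rfl, h⟩

lemma transfer_singletonsOutside (P : Finpartition (univ : Finset V₁)) :
    SingletonsOutside t (transfer e P) := by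
  intro w hw v h
  rcases (samePart_transfer e).1 h with rfl | ⟨a, b, rfl, rfl, -⟩
  · rfl
  · exact absurd (e a).2 hw

lemma transfer_symm_transfer (hP : SingletonsOutside s P) :
    transfer e.symm (transfer e P) = P := by
  refine Finpartition.eq_of_samePart_iff fun u v => ?_
  rw [samePart_transfer]
  constructor
  · rintro (rfl | ⟨a, b, rfl, rfl, h⟩)
    · exact samePart_refl P u
    · rwa [← e.apply_symm_apply a, ← e.apply_symm_apply b, samePart_transfer_apply] at h
  · intro h
    by_cases huv : u = v
    · exact .inl huv
    obtain ⟨hu, hv⟩ := hP.mem_of_samePart h huv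
    refine .inr ⟨e ⟨u, hu⟩, e ⟨v, hv⟩, by simp, by simp, ?_⟩
    rwa [samePart_transfer_apply]

lemma movedBy_transfer (hP : SingletonsOutside s P) (hQ : SingletonsOutside s Q) {x : V₁}
    (hx : x ∈ s) (h : MovedBy P Q x) : MovedBy (transfer e P) (transfer e Q) (e ⟨x, hx⟩) := by
  refine ⟨fun hPQ => h.1 ?_, fun u v hu hv => ?_⟩
  · rw [← transfer_symm_transfer e hP, hPQ, transfer_symm_transfer e hQ]
  have ne_x {a : s} {w : V₂} (ha : (e a : V₂) = w) (hw : w ≠ e ⟨x, hx⟩) : (a : V₁) ≠ x :=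
    fun hax => hw (by rw [← ha, show a = ⟨x, hx⟩ from Subtype.ext hax])
  simp only [samePart_transfer]
  exact or_congr_right <| exists_congr fun a => exists_congr fun b =>
    and_congr_right fun ha => and_congr_right fun hb => h.2 _ _ (ne_x ha hu) (ne_x hb hv)

lemma exists_movedBy_transfer (hP : SingletonsOutside s P) (hQ : SingletonsOutside s Q) :
    (∃ x, MovedBy P Q x) → ∃ y, MovedBy (transfer e P) (transfer e Q) y := by
  rintro ⟨x, h⟩
  by_cases hx : x ∈ s
  · exact ⟨_, movedBy_transfer e hP hQ hx h⟩
  · exact absurd h (not_movedBy_of_not_mem hP hQ hx)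

lemma exists_movedBy_transfer_iff (hP : SingletonsOutside s P) (hQ : SingletonsOutside s Q) :
    (∃ y, MovedBy (transfer e P) (transfer e Q) y) ↔ ∃ x, MovedBy P Q x := by
  refine ⟨fun h => ?_, exists_movedBy_transfer e hP hQ⟩
  rw [← transfer_symm_transfer e hP, ← transfer_symm_transfer e hQ]
  exact exists_movedBy_transfer e.symm (transfer_singletonsOutside e P)
    (transfer_singletonsOutside e Q) h

lemma card_image_part_transfer [DecidablePred (· ∈ s)] [DecidablePred (· ∈ t)] :
    #(univ.image fun b : t => (transfer e P).part b) = #(univ.image fun a : s => P.part a) := by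
  rw [← image_univ_equiv e, image_image]
  refine card_image_eq_card_image_of_fibers fun a _ b _ => ?_
  simp only [Function.comp_apply, part_eq_part_iff_samePart, samePart_transfer_apply]

lemma card_parts_transfer_sub_card (hP : SingletonsOutside s P) :
    (#(transfer e P).parts : ℤ) - Fintype.card V₂ = #P.parts - Fintype.card V₁ := by
  classical
  have h₁ := hP.card_parts_add_card
  have h₂ := (transfer_singletonsOutside e P).card_parts_add_card
  have hst : Fintype.card s = Fintype.card t := Fintype.card_congr e
  rw [card_image_part_transfer e] at h₂
  omega

lemma isISP_transfer (e : G₁.induce s ≃g G₂.induce t) (hP : IsISP G₁ P) :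
    IsISP G₂ (transfer e.toEquiv P) := by
  refine isISP_iff.2 fun u v huv hadj => ?_
  rcases (samePart_transfer _).1 huv with rfl | ⟨a, b, rfl, rfl, hab⟩
  · exact G₂.loopless.irrefl _ hadj
  · exact isISP_iff.1 hP a b hab (e.map_adj_iff.1 hadj)

lemma le_card_parts_transfer_iff (e : s ≃ t) (hP : SingletonsOutside s P) {k₁ k₂ : ℕ}
    (hnk : (Fintype.card V₁ : ℤ) - k₁ = Fintype.card V₂ - k₂) :
    k₁ ≤ #P.parts ↔ k₂ ≤ #(transfer e P).parts := by
  have := card_parts_transfer_sub_card e hP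
  omega

noncomputable def upperBellIso
    (e : G₁.induce {v | ¬ IsUniversal G₁ v} ≃g G₂.induce {v | ¬ IsUniversal G₂ v}) {k₁ k₂ : ℕ}
    (hnk : (Fintype.card V₁ : ℤ) - k₁ = Fintype.card V₂ - k₂) :
    UpperBell G₁ k₁ ≃g UpperBell G₂ k₂ where
  toFun P := ⟨transfer e.toEquiv P, isISP_transfer e P.2.1,
    (le_card_parts_transfer_iff _ P.2.1.singletonsOutside hnk).1 P.2.2⟩
  invFun Q := ⟨transfer e.symm.toEquiv Q, isISP_transfer e.symm Q.2.1,
    (le_card_parts_transfer_iff _ Q.2.1.singletonsOutside hnk.symm).1 Q.2.2⟩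
  left_inv P := Subtype.ext (transfer_symm_transfer _ P.2.1.singletonsOutside)
  right_inv Q := Subtype.ext (transfer_symm_transfer e.symm.toEquiv Q.2.1.singletonsOutside)
  map_rel_iff' {P Q} :=
    exists_movedBy_transfer_iff _ P.2.1.singletonsOutside Q.2.1.singletonsOutside

end Transfer

theorem stmt14 {V₁ V₂ : Type*} [Fintype V₁] [DecidableEq V₁] [Fintype V₂] [DecidableEq V₂]
    (G₁ : SimpleGraph V₁) (G₂ : SimpleGraph V₂) (k₁ k₂ : ℕ)
    (hnk : (Fintype.card V₁ : ℤ) - (k₁ : ℤ) = (Fintype.card V₂ : ℤ) - (k₂ : ℤ))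
    (hiso : Nonempty
      ((SimpleGraph.induce {v : V₁ | ¬ IsUniversal G₁ v} G₁) ≃g
       (SimpleGraph.induce {v : V₂ | ¬ IsUniversal G₂ v} G₂))) :
    Nonempty (UpperBell G₁ k₁ ≃g UpperBell G₂ k₂) :=
  hiso.map fun e => upperBellIso e hnk
end

section
/- Let G be a graph whose complement's edges pairwise share a common vertex v (i.e., every non-edge of G is incident to v) and which has at least one non-edge, and let k ≤ n − 2 where n = |V(G)|. Then B_{≥k}(G) is a clique on 1 + m vertices, where m is the number of non-edges of G. -/
open Finset

variable {V : Type*} [Fintype V] [DecidableEq V]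

/-!
Since every non-edge contains `v`, a partition into independent sets can only put `v` together
with a single non-neighbour `w`; every other vertex is a singleton. So these partitions are the
partitions `{v, w}` plus singletons, one for each non-neighbour `w` of `v` (with `w = v` giving the
discrete partition); each has at least `n - 1` parts, and any two of them differ only in the
position of `v`.
-/

lemma samePart_iff_mem_part_s16 (P : Finpartition (univ : Finset V)) (a b : V) :
    samePart P a b ↔ a ∈ P.part b :=
  P.mem_part_iff_exists.symm

lemma samePart_comm_s16 (P : Finpartition (univ : Finset V)) (a b : V) :
    samePart P a b ↔ samePart P b a := by
  simp only [samePart, and_comm]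

lemma samePart_self (P : Finpartition (univ : Finset V)) (a : V) : samePart P a a := by
  simp [samePart_iff_mem_part_s16]

lemma samePart_trans {P : Finpartition (univ : Finset V)} {a b c : V}
    (hab : samePart P a b) (hbc : samePart P b c) : samePart P a c := by
  rw [samePart_iff_mem_part_s16] at *
  rwa [P.part_eq_of_mem (P.part_mem.2 (mem_univ c)) hbc] at hab

lemma Finpartition.eq_of_samePart_iff_s16 {P Q : Finpartition (univ : Finset V)}
    (h : ∀ a b, samePart P a b ↔ samePart Q a b) : P = Q := by
  have hpart : P.part = Q.part := by
    ext a b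
    rw [← samePart_iff_mem_part_s16, ← samePart_iff_mem_part_s16, h]
  ext t
  constructor
  · intro ht
    obtain ⟨a, ha, rfl⟩ := P.part_surjOn ht
    exact hpart ▸ Q.part_mem.2 ha
  · intro ht
    obtain ⟨a, ha, rfl⟩ := Q.part_surjOn ht
    exact hpart ▸ P.part_mem.2 ha

lemma IsISP.not_adj {G : SimpleGraph V} {P : Finpartition (univ : Finset V)} (hP : IsISP G P)
    {a b : V} (h : samePart P a b) : ¬ G.Adj a b := by
  obtain ⟨A, hA, ha, hb⟩ := h
  exact hP A hA a ha b hb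

-- `{v, w}` together with singletons; the discrete partition when `w = v`.
open Classical in
noncomputable def pairPartition (v w : V) : Finpartition (univ : Finset V) :=
  Finpartition.ofSetoid (Setoid.ker (Function.update id w v))

lemma samePart_pairPartition (v w a b : V) :
    samePart (pairPartition v w) a b ↔ Function.update id w v a = Function.update id w v b := by
  rw [samePart_iff_mem_part_s16, pairPartition, Finpartition.mem_part_ofSetoid_iff_rel, eq_comm]
  rfl

lemma samePart_pairPartition_left (v w x : V) :
    samePart (pairPartition v w) v x ↔ x = v ∨ x = w := by
  rw [samePart_pairPartition]
  simp only [Function.update_apply, id]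
  grind

lemma pairPartition_injective (v : V) : Function.Injective (pairPartition v) := by
  intro w₁ w₂ h
  have h₁ := samePart_pairPartition_left v w₁ w₁
  have h₂ := samePart_pairPartition_left v w₂ w₂
  rw [h] at h₁
  rw [← h] at h₂
  rw [samePart_pairPartition_left] at h₁ h₂
  grind

lemma isISP_pairPartition {G : SimpleGraph V} {v w : V} (hvw : ¬ G.Adj v w) :
    IsISP G (pairPartition v w) := by
  intro A hA a ha b hb
  have h := (samePart_pairPartition v w a b).1 ⟨A, hA, ha, hb⟩
  simp only [Function.update_apply, id] at h
  split_ifs at h with ha' hb' hb' <;> subst_vars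
  · exact G.loopless.irrefl _
  · exact fun h => hvw h.symm
  · exact hvw
  · exact G.loopless.irrefl _

section NonEdgesThroughVertex

variable {G : SimpleGraph V} {v : V}

lemma IsISP.samePart_iff_eq (hv : ∀ a b : V, a ≠ b → ¬ G.Adj a b → a = v ∨ b = v)
    {P : Finpartition (univ : Finset V)} (hP : IsISP G P) {a b : V}
    (ha : a ≠ v) (hb : b ≠ v) : samePart P a b ↔ a = b := by
  refine ⟨fun h => ?_, fun h => h ▸ samePart_self P a⟩
  by_contra hab
  rcases hv a b hab (hP.not_adj h) with rfl | rfl <;> contradiction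

lemma IsISP.movedBy (hv : ∀ a b : V, a ≠ b → ¬ G.Adj a b → a = v ∨ b = v)
    {P Q : Finpartition (univ : Finset V)} (hP : IsISP G P) (hQ : IsISP G Q)
    (hPQ : P ≠ Q) : MovedBy P Q v :=
  ⟨hPQ, fun a b ha hb => by rw [hP.samePart_iff_eq hv ha hb, hQ.samePart_iff_eq hv ha hb]⟩

lemma IsISP.card_sub_one_le_card_parts (hv : ∀ a b : V, a ≠ b → ¬ G.Adj a b → a = v ∨ b = v)
    {P : Finpartition (univ : Finset V)} (hP : IsISP G P) :
    Fintype.card V - 1 ≤ #P.parts := by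
  rw [← card_univ, ← card_erase_of_mem (mem_univ v)]
  refine card_le_card_of_injOn P.part (fun a _ => P.part_mem.2 (mem_univ a)) ?_
  intro a ha b hb hab
  rw [← hP.samePart_iff_eq hv (ne_of_mem_erase ha) (ne_of_mem_erase hb), samePart_iff_mem_part_s16,
    ← hab]
  exact P.mem_part (mem_univ a)

lemma IsISP.eq_of_samePart_left_iff (hv : ∀ a b : V, a ≠ b → ¬ G.Adj a b → a = v ∨ b = v)
    {P Q : Finpartition (univ : Finset V)} (hP : IsISP G P) (hQ : IsISP G Q)
    (h : ∀ x, samePart P v x ↔ samePart Q v x) : P = Q := by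
  refine Finpartition.eq_of_samePart_iff_s16 fun a b => ?_
  rcases eq_or_ne a v with rfl | ha
  · exact h b
  rcases eq_or_ne b v with rfl | hb
  · rw [samePart_comm_s16, h, samePart_comm_s16]
  rw [hP.samePart_iff_eq hv ha hb, hQ.samePart_iff_eq hv ha hb]

lemma IsISP.exists_samePart_left_iff (hv : ∀ a b : V, a ≠ b → ¬ G.Adj a b → a = v ∨ b = v)
    {P : Finpartition (univ : Finset V)} (hP : IsISP G P) :
    ∃ w, ∀ x, samePart P v x ↔ x = v ∨ x = w := by
  by_cases h : ∃ w, w ≠ v ∧ samePart P v w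
  · obtain ⟨w, hw, hvw⟩ := h
    refine ⟨w, fun x => ⟨fun hvx => ?_, ?_⟩⟩
    · rcases eq_or_ne x v with hx | hx
      · exact Or.inl hx
      · exact Or.inr ((hP.samePart_iff_eq hv hx hw).1
          (samePart_trans ((samePart_comm_s16 P v x).1 hvx) hvw))
    · rintro (rfl | rfl)
      exacts [samePart_self P x, hvw]
  · push Not at h
    refine ⟨v, fun x => ⟨fun hvx => Or.inl (by_contra fun hx => h x hx hvx), ?_⟩⟩
    rintro (rfl | rfl) <;> exact samePart_self _ _

lemma IsISP.exists_eq_pairPartition (hv : ∀ a b : V, a ≠ b → ¬ G.Adj a b → a = v ∨ b = v)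
    {P : Finpartition (univ : Finset V)} (hP : IsISP G P) :
    ∃ w, ¬ G.Adj v w ∧ P = pairPartition v w := by
  obtain ⟨w, hw⟩ := hP.exists_samePart_left_iff hv
  have hvw : ¬ G.Adj v w := hP.not_adj ((hw w).2 (Or.inr rfl))
  refine ⟨w, hvw, hP.eq_of_samePart_left_iff hv (isISP_pairPartition hvw) fun x => ?_⟩
  rw [hw, samePart_pairPartition_left]

lemma bijective_pairPartition (hv : ∀ a b : V, a ≠ b → ¬ G.Adj a b → a = v ∨ b = v) :
    Function.Bijective fun w : {w // ¬ G.Adj v w} =>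
      (⟨pairPartition v w, isISP_pairPartition w.2⟩ : {P // IsISP G P}) := by
  refine ⟨fun w₁ w₂ h => Subtype.ext (pairPartition_injective v (congrArg Subtype.val h)), ?_⟩
  rintro ⟨P, hP⟩
  obtain ⟨w, hvw, rfl⟩ := hP.exists_eq_pairPartition hv
  exact ⟨⟨w, hvw⟩, rfl⟩

lemma card_nonAdj_eq_one_add_card_compl_edgeSet
    (hv : ∀ a b : V, a ≠ b → ¬ G.Adj a b → a = v ∨ b = v) :
    Nat.card {w // ¬ G.Adj v w} = 1 + Nat.card Gᶜ.edgeSet := by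
  have hedges : Gᶜ.incidenceSet v = Gᶜ.edgeSet := by
    refine Set.Subset.antisymm (Gᶜ.incidenceSet_subset v) fun e he => ⟨he, ?_⟩
    induction e using Sym2.ind with
    | _ a b =>
      obtain ⟨hab, hnadj⟩ := (SimpleGraph.compl_adj G a b).1 he
      rcases hv a b hab hnadj with rfl | rfl
      exacts [Sym2.mem_mk_left _ _, Sym2.mem_mk_right _ _]
  have hnonadj : {w | ¬ G.Adj v w} = insert v (Gᶜ.neighborSet v) := by
    ext w
    simp only [Set.mem_ofPred_eq, Set.mem_insert_iff, SimpleGraph.mem_neighborSet,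
      SimpleGraph.compl_adj]
    grind [G.loopless.irrefl v]
  calc Nat.card {w // ¬ G.Adj v w}
      = (insert v (Gᶜ.neighborSet v)).ncard := by rw [← hnonadj]; rfl
    _ = 1 + Nat.card (Gᶜ.neighborSet v) := by
      rw [Set.ncard_insert_of_notMem Gᶜ.notMem_neighborSet_self, add_comm]; rfl
    _ = 1 + Nat.card Gᶜ.edgeSet := by
      rw [← hedges, Nat.card_congr (Gᶜ.incidenceSetEquivNeighborSet v)]

end NonEdgesThroughVertex

theorem stmt16_general (G : SimpleGraph V) (k : ℕ)
    (hv : ∃ v : V, ∀ a b : V, a ≠ b → ¬ G.Adj a b → (a = v ∨ b = v))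
    (hk : k ≤ Fintype.card V - 2) :
    UpperBell G k = ⊤ ∧
    Nat.card {P : Finpartition (univ : Finset V) // IsISP G P ∧ k ≤ P.parts.card} =
      1 + Nat.card Gᶜ.edgeSet := by
  obtain ⟨v, hv⟩ := hv
  have hk' (P : Finpartition (univ : Finset V)) (hP : IsISP G P) : k ≤ P.parts.card :=
    hk.trans ((Nat.sub_le_sub_left (by norm_num) _).trans (hP.card_sub_one_le_card_parts hv))
  refine ⟨?_, ?_⟩
  · ext P Q
    exact ⟨fun h => h.ne, fun hPQ => ⟨v, P.2.1.movedBy hv Q.2.1 fun h => hPQ (Subtype.ext h)⟩⟩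
  · calc Nat.card {P : Finpartition (univ : Finset V) // IsISP G P ∧ k ≤ P.parts.card}
        = Nat.card {P : Finpartition (univ : Finset V) // IsISP G P} :=
          Nat.card_congr (Equiv.subtypeEquivRight fun P => and_iff_left_of_imp (hk' P))
      _ = Nat.card {w // ¬ G.Adj v w} :=
          (Nat.card_eq_of_bijective _ (bijective_pairPartition hv)).symm
      _ = 1 + Nat.card Gᶜ.edgeSet := card_nonAdj_eq_one_add_card_compl_edgeSet hv

theorem stmt16 (G : SimpleGraph V) (k : ℕ)
    (hv : ∃ v : V, ∀ a b : V, a ≠ b → ¬ G.Adj a b → (a = v ∨ b = v))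
    (hne : ∃ a b : V, a ≠ b ∧ ¬ G.Adj a b)
    (hk : k ≤ Fintype.card V - 2) :
    UpperBell G k = ⊤ ∧
    Nat.card {P : Finpartition (univ : Finset V) // IsISP G P ∧ k ≤ P.parts.card} =
      1 + Nat.card Gᶜ.edgeSet :=
  stmt16_general G k hv hk
end
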